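/- Let P be a stochastic matrix on a finite state space S of size n, where each row of P either is a point mass or places probability 1/2 on each of two states, and all entries lie in {0, 1/2, 1}. Let T ⊆ S be absorbing. Then for every s ∈ S, the probability h(s) of eventually reaching T from s (the minimal solution in [0,1]^S of h(s)=1 for s∈T and h(s)=∑_t P(s,t)h(t) otherwise) is a rational number expressible as p/q with natural numbers p, q ≤ 4^{n−1}. -/

import Mathlib

/-!
Let `R` be the set of states outside `T` from which `T` can be reached. Every state of `R` reaches
the complement of `R`, so by the maximum principle a function that is harmonic on `R` is
controlled by its values off `R`; hence the Dirichlet problem on `R` with boundary values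
`1` on `T` and `0` elsewhere has a unique solution, with values in `[0, 1]`. That solution is a
competitor vanishing where `T` is unreachable, so the minimal solution `h` vanishes there too and is
itself the solution of this linear system. Scaling the rows of `R` by `2` makes the system integral,
so by Cramer's rule `h s = e / d` with `d` the determinant. A row of `R` has `ℓ¹`-norm at most
`2 + 2 = 4` and every other row is a unit vector, so `|d| ≤ 4 ^ #R ≤ 4 ^ (n - 1)`, and
`|e| ≤ |d|` because `0 ≤ h s ≤ 1`.
-/

open Finset Matrix

section IntegerSystems

variable {ι R : Type*} [Fintype ι] [DecidableEq ι] [CommRing R] [LinearOrder R]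
  [IsStrictOrderedRing R]

theorem Matrix.abs_det_le_prod_sum_abs (A : Matrix ι ι R) :
    |A.det| ≤ ∏ i, ∑ j, |A i j| := by
  let coeFn : Equiv.Perm ι ↪ (ι → ι) := ⟨(⇑), DFunLike.coe_injective⟩
  calc |A.det| = |∑ σ : Equiv.Perm ι, Equiv.Perm.sign σ • ∏ i, A i (σ i)| := by
        rw [← det_transpose, det_apply]; rfl
    _ ≤ ∑ σ : Equiv.Perm ι, ∏ i, |A i (σ i)| := by
        refine (abs_sum_le_sum_abs _ _).trans_eq (sum_congr rfl fun σ _ => ?_)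
        rw [Units.smul_def, zsmul_eq_mul, abs_mul, abs_unit_intCast, one_mul, abs_prod]
    _ = ∑ f ∈ univ.map coeFn, ∏ i, |A i (f i)| := by rw [sum_map]; rfl
    _ ≤ ∑ f : ι → ι, ∏ i, |A i (f i)| :=
        sum_le_sum_of_subset_of_nonneg (subset_univ _)
          fun _ _ _ => prod_nonneg fun _ _ => abs_nonneg _
    _ = ∏ i, ∑ j, |A i j| := (Fintype.prod_sum (κ := fun _ => ι) fun i j => |A i j|).symm

theorem exists_nat_div_of_intCast_mul_eq {x : ℝ} {d e : ℤ} (hd : d ≠ 0) (h : (d : ℝ) * x = e)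
    (hx : x ∈ Set.Icc (0 : ℝ) 1) : ∃ p : ℕ, p ≤ d.natAbs ∧ x = p / d.natAbs := by
  have habs : |(e : ℝ)| = |(d : ℝ)| * x := by rw [← h, abs_mul, abs_of_nonneg hx.1]
  have hd' : |(d : ℝ)| ≠ 0 := by positivity
  refine ⟨e.natAbs, ?_, ?_⟩
  · have : |(e : ℝ)| ≤ |(d : ℝ)| := by rw [habs]; exact mul_le_of_le_one_right (abs_nonneg _) hx.2
    zify
    exact_mod_cast this
  · rw [Nat.cast_natAbs, Nat.cast_natAbs, Int.cast_abs, Int.cast_abs, habs]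
    field_simp

theorem exists_nat_div_of_mulVec_eq {A : Matrix ι ι ℝ} {x b : ι → ℝ}
    (hA : ∀ i j, ∃ k : ℤ, A i j = k) (hb : ∀ i, ∃ k : ℤ, b i = k) (hdet : A.det ≠ 0)
    (hAx : A *ᵥ x = b) {s : ι} (hxs : x s ∈ Set.Icc (0 : ℝ) 1) :
    ∃ p q : ℕ, q ≠ 0 ∧ p ≤ q ∧ (q : ℝ) ≤ ∏ i, ∑ j, |A i j| ∧ x s = p / q := by
  obtain ⟨M, hM⟩ : ∃ M : Matrix ι ι ℤ, ∀ i j, A i j = M i j :=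
    ⟨fun i j => (hA i j).choose, fun i j => (hA i j).choose_spec⟩
  choose c hc using hb
  have hAM : A = M.map (Int.castRingHom ℝ) := by ext i j; exact hM i j
  have hdetM : A.det = (M.det : ℝ) := by rw [hAM]; exact ((Int.castRingHom ℝ).map_det M).symm
  have hcramer : (M.det : ℝ) * x s = ((M.adjugate *ᵥ c) s : ℤ) := by
    have hsmul : A.det • x = A.adjugate *ᵥ b := by
      rw [← hAx, mulVec_mulVec, adjugate_mul, smul_mulVec, one_mulVec]
    have hb' : b = Int.castRingHom ℝ ∘ c := funext hc
    calc (M.det : ℝ) * x s = (A.adjugate *ᵥ b) s := by rw [← hdetM, ← hsmul]; rfl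
      _ = (M.adjugate.map (Int.castRingHom ℝ) *ᵥ (Int.castRingHom ℝ ∘ c)) s := by
        rw [hb', hAM]; congr 2; exact ((Int.castRingHom ℝ).map_adjugate M).symm
      _ = ((M.adjugate *ᵥ c) s : ℤ) := ((Int.castRingHom ℝ).map_mulVec _ _ _).symm
  have hd : M.det ≠ 0 := by rintro h0; exact hdet (by rw [hdetM, h0, Int.cast_zero])
  obtain ⟨p, hp, hx⟩ := exists_nat_div_of_intCast_mul_eq hd hcramer hxs
  refine ⟨p, M.det.natAbs, Int.natAbs_ne_zero.2 hd, hp, ?_, hx⟩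
  rw [Nat.cast_natAbs, Int.cast_abs, ← hdetM]
  exact abs_det_le_prod_sum_abs A

end IntegerSystems

namespace MarkovChain

variable {ι : Type*} [Fintype ι]

def HarmonicOn (P : ι → ι → ℝ) (S : Finset ι) (f : ι → ℝ) : Prop :=
  ∀ s ∈ S, f s = ∑ t, P s t * f t

theorem HarmonicOn.neg {P : ι → ι → ℝ} {S : Finset ι} {f : ι → ℝ} (hf : HarmonicOn P S f) :
    HarmonicOn P S (-f) := fun s hs => by
  simp only [Pi.neg_apply, mul_neg, sum_neg_distrib, hf s hs]

section MaximumPrinciple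

variable {P : ι → ι → ℝ} {S : Finset ι} (hP0 : ∀ s t, 0 ≤ P s t) (hP1 : ∀ s, ∑ t, P s t ≤ 1)
  (hexit : ∀ s ∈ S, ∃ t ∉ S, Relation.ReflTransGen (fun a b => 0 < P a b) s t)
include hP0 hP1 hexit

theorem nonpos_of_subharmonicOn {f : ι → ℝ} (hsub : ∀ s ∈ S, f s ≤ ∑ t, P s t * f t)
    (hbdry : ∀ s ∉ S, f s ≤ 0) (s : ι) : f s ≤ 0 := by
  by_contra! hpos
  obtain ⟨m, -, hm⟩ := exists_max_image univ f ⟨s, mem_univ s⟩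
  have hM : 0 < f m := hpos.trans_le (hm s (mem_univ s))
  have hlt : ∀ a t, t ∉ S → Relation.ReflTransGen (fun a b => 0 < P a b) a t → f a < f m := by
    intro a t ht hpath
    induction hpath using Relation.ReflTransGen.head_induction_on with
    | refl => exact (hbdry t ht).trans_lt hM
    | @head a u hau _ ih =>
      by_cases ha : a ∈ S
      · calc f a ≤ ∑ v, P a v * f v := hsub a ha
          _ < ∑ v, P a v * f m :=
            sum_lt_sum (fun v _ => mul_le_mul_of_nonneg_left (hm v (mem_univ v)) (hP0 a v))
              ⟨u, mem_univ u, mul_lt_mul_of_pos_left ih hau⟩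
          _ = (∑ v, P a v) * f m := (sum_mul ..).symm
          _ ≤ f m := mul_le_of_le_one_left hM.le (hP1 a)
      · exact (hbdry a ha).trans_lt hM
  by_cases hmS : m ∈ S
  · obtain ⟨t, ht, hpath⟩ := hexit m hmS
    exact (hlt m t ht hpath).false
  · exact (hbdry m hmS).not_gt hM

theorem HarmonicOn.eq_zero {f : ι → ℝ} (hf : HarmonicOn P S f) (hbdry : ∀ s ∉ S, f s = 0) :
    f = 0 := funext fun s => le_antisymm
  (nonpos_of_subharmonicOn hP0 hP1 hexit (fun s hs => (hf s hs).le)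
    (fun s hs => (hbdry s hs).le) s)
  (neg_nonpos.1 (nonpos_of_subharmonicOn hP0 hP1 hexit (fun s hs => (hf.neg s hs).le)
    (fun s hs => by simp [hbdry s hs]) s))

theorem HarmonicOn.mem_Icc {f : ι → ℝ} (hf : HarmonicOn P S f)
    (hbdry : ∀ s ∉ S, f s ∈ Set.Icc (0 : ℝ) 1) (s : ι) : f s ∈ Set.Icc (0 : ℝ) 1 := by
  constructor
  · exact neg_nonpos.1 (nonpos_of_subharmonicOn hP0 hP1 hexit (fun s hs => (hf.neg s hs).le)
      (fun s hs => neg_nonpos.2 (hbdry s hs).1) s)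
  · refine sub_nonpos.1 (nonpos_of_subharmonicOn hP0 hP1 hexit (fun s hs => ?_)
      (fun s hs => sub_nonpos.2 (hbdry s hs).2) s)
    simp only [mul_sub, mul_one, sum_sub_distrib, ← hf s hs]
    linarith [hP1 s]

end MaximumPrinciple

section DirichletMatrix

variable [DecidableEq ι] (P : ι → ι → ℝ) (S : Finset ι)

-- Rows in `S` are scaled by 2, so that a binary chain gives an integer matrix.
noncomputable def dirichletMatrix : Matrix ι ι ℝ :=
  of fun s t => if s ∈ S then 2 * ((if s = t then 1 else 0) - P s t) else if s = t then 1 else 0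

theorem dirichletMatrix_mulVec_apply (f : ι → ℝ) (s : ι) :
    (dirichletMatrix P S *ᵥ f) s = if s ∈ S then 2 * (f s - ∑ t, P s t * f t) else f s := by
  split_ifs with hs <;>
    simp [dirichletMatrix, mulVec, dotProduct, hs, mul_sub, sub_mul, mul_sum, sum_sub_distrib,
      mul_assoc]

theorem dirichletMatrix_mulVec_eq_iff {f β : ι → ℝ} (hβ : ∀ s ∈ S, β s = 0) :
    dirichletMatrix P S *ᵥ f = β ↔ HarmonicOn P S f ∧ ∀ s ∉ S, f s = β s := by
  simp only [funext_iff, dirichletMatrix_mulVec_apply]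
  constructor
  · intro h
    refine ⟨fun s hs => ?_, fun s hs => by simpa [hs] using h s⟩
    have := h s
    rw [if_pos hs, hβ s hs] at this
    linarith
  · rintro ⟨hf, hb⟩ s
    split_ifs with hs
    · rw [hβ s hs, ← hf s hs, sub_self, mul_zero]
    · exact hb s hs

omit [Fintype ι] in
theorem dirichletMatrix_entry_eq_intCast (h2P : ∀ s t, ∃ k : ℤ, 2 * P s t = k) (s t : ι) :
    ∃ k : ℤ, dirichletMatrix P S s t = k := by
  obtain ⟨k, hk⟩ := h2P s t
  by_cases hs : s ∈ S
  · refine ⟨2 * (if s = t then 1 else 0) - k, ?_⟩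
    simp only [dirichletMatrix, of_apply, if_pos hs, mul_sub, hk]
    split_ifs <;> simp
  · refine ⟨if s = t then 1 else 0, ?_⟩
    simp only [dirichletMatrix, of_apply, if_neg hs]
    split_ifs <;> simp

variable {P}

theorem sum_abs_dirichletMatrix_le (hP0 : ∀ s t, 0 ≤ P s t) (hP1 : ∀ s, ∑ t, P s t ≤ 1)
    (s : ι) : ∑ t, |dirichletMatrix P S s t| ≤ if s ∈ S then 4 else 1 := by
  by_cases hs : s ∈ S
  · simp only [dirichletMatrix, of_apply, if_pos hs]
    calc ∑ t, |2 * ((if s = t then 1 else 0) - P s t)|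
        ≤ ∑ t, (2 * (if s = t then 1 else 0) + 2 * P s t) := sum_le_sum fun t _ => by
          rw [abs_mul, abs_two, ← mul_add]
          gcongr
          refine (abs_sub _ _).trans ?_
          rw [abs_of_nonneg (hP0 s t)]
          split_ifs <;> simp
      _ ≤ 4 := by
        rw [sum_add_distrib, ← mul_sum, ← mul_sum, sum_ite_eq, if_pos (mem_univ s)]
        linarith [hP1 s]
  · simp only [dirichletMatrix, of_apply, if_neg hs, abs_ite, abs_one, abs_zero, sum_ite_eq,
      mem_univ, if_true, le_refl]

theorem prod_sum_abs_dirichletMatrix_le (hP0 : ∀ s t, 0 ≤ P s t)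
    (hP1 : ∀ s, ∑ t, P s t ≤ 1) : ∏ s, ∑ t, |dirichletMatrix P S s t| ≤ 4 ^ #S :=
  calc ∏ s, ∑ t, |dirichletMatrix P S s t| ≤ ∏ s, if s ∈ S then (4 : ℝ) else 1 :=
        prod_le_prod (fun _ _ => sum_nonneg fun _ _ => abs_nonneg _)
          fun s _ => sum_abs_dirichletMatrix_le S hP0 hP1 s
    _ = 4 ^ #S := by rw [Fintype.prod_ite_mem, prod_const]

theorem det_dirichletMatrix_ne_zero (hP0 : ∀ s t, 0 ≤ P s t) (hP1 : ∀ s, ∑ t, P s t ≤ 1)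
    (hexit : ∀ s ∈ S, ∃ t ∉ S, Relation.ReflTransGen (fun a b => 0 < P a b) s t) :
    (dirichletMatrix P S).det ≠ 0 := fun h => by
  obtain ⟨v, hv0, hv⟩ := exists_mulVec_eq_zero_iff.2 h
  obtain ⟨hharm, hbdry⟩ := (dirichletMatrix_mulVec_eq_iff P S fun _ _ => rfl).1 hv
  exact hv0 (hharm.eq_zero hP0 hP1 hexit hbdry)

end DirichletMatrix

section Reachability

variable (P : ι → ι → ℝ) (T : Finset ι)

def Reaches (s : ι) : Prop :=
  ∃ t ∈ T, Relation.ReflTransGen (fun a b => 0 < P a b) s t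

omit [Fintype ι] in
theorem reaches_of_mem {s : ι} (hs : s ∈ T) : Reaches P T s := ⟨s, hs, .refl⟩

omit [Fintype ι] in
theorem Reaches.head {s t : ι} (ht : Reaches P T t) (hst : 0 < P s t) : Reaches P T s :=
  let ⟨u, hu, hpath⟩ := ht
  ⟨u, hu, hpath.head hst⟩

open Classical in
noncomputable def reachingStates : Finset ι := {s | s ∉ T ∧ Reaches P T s}

variable {P T}

theorem mem_reachingStates {s : ι} : s ∈ reachingStates P T ↔ s ∉ T ∧ Reaches P T s := by
  simp [reachingStates]

theorem notMem_reachingStates_of_mem {t : ι} (ht : t ∈ T) : t ∉ reachingStates P T :=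
  fun h => (mem_reachingStates.1 h).1 ht

theorem exists_exit_reachingStates (s : ι) (hs : s ∈ reachingStates P T) :
    ∃ t ∉ reachingStates P T, Relation.ReflTransGen (fun a b => 0 < P a b) s t :=
  let ⟨t, ht, hpath⟩ := (mem_reachingStates.1 hs).2
  ⟨t, notMem_reachingStates_of_mem ht, hpath⟩

variable (P T)

theorem card_reachingStates_le : #(reachingStates P T) ≤ Fintype.card ι - 1 := by
  rcases (reachingStates P T).eq_empty_or_nonempty with h | ⟨s, hs⟩
  · simp [h]
  · obtain ⟨-, t, ht, -⟩ := mem_reachingStates.1 hs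
    have := card_lt_univ_of_notMem (notMem_reachingStates_of_mem (P := P) ht)
    omega

theorem exists_solution_eq_zero_of_not_reaches (hP0 : ∀ s t, 0 ≤ P s t)
    (hP1 : ∀ s, ∑ t, P s t ≤ 1) :
    ∃ g : ι → ℝ, (∀ s, 0 ≤ g s ∧ g s ≤ 1) ∧ (∀ s ∈ T, g s = 1) ∧
      (∀ s ∉ T, g s = ∑ t, P s t * g t) ∧ ∀ s, ¬ Reaches P T s → g s = 0 := by
  classical
  set R := reachingStates P T
  set β : ι → ℝ := fun s => if s ∈ T then 1 else 0
  have hdet := det_dirichletMatrix_ne_zero R hP0 hP1 exists_exit_reachingStates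
  set g := (dirichletMatrix P R)⁻¹ *ᵥ β
  have hg : dirichletMatrix P R *ᵥ g = β := by
    rw [mulVec_mulVec, mul_nonsing_inv _ (isUnit_iff_ne_zero.2 hdet), one_mulVec]
  obtain ⟨hharm, hbdry⟩ := (dirichletMatrix_mulVec_eq_iff P R fun s hs =>
    if_neg (mem_reachingStates.1 hs).1).1 hg
  have hzero : ∀ s, ¬ Reaches P T s → g s = 0 := fun s hs => by
    rw [hbdry s fun h => hs (mem_reachingStates.1 h).2]
    exact if_neg fun h => hs (reaches_of_mem P T h)
  refine ⟨g, hharm.mem_Icc hP0 hP1 exists_exit_reachingStates fun s hs => ?_,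
    fun s hs => (hbdry s (notMem_reachingStates_of_mem hs)).trans (if_pos hs),
    fun s hs => ?_, hzero⟩
  · rw [hbdry s hs]
    split_ifs <;> simp
  by_cases hsR : s ∈ R
  · exact hharm s hsR
  · have hns : ¬ Reaches P T s := fun h => hsR (mem_reachingStates.2 ⟨hs, h⟩)
    rw [hzero s hns]
    refine (sum_eq_zero fun t _ => ?_).symm
    rcases (hP0 s t).eq_or_lt with h0 | hpos
    · rw [← h0, zero_mul]
    · rw [hzero t fun ht => hns (ht.head P T hpos), mul_zero]

end Reachability

end MarkovChain

open MarkovChain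

theorem two_mul_eq_intCast_of_binary {ι : Type*} {P : ι → ι → ℝ}
    (hrow : ∀ s, (∃ t, P s t = 1 ∧ ∀ u, u ≠ t → P s u = 0) ∨
      (∃ t u, t ≠ u ∧ P s t = 1/2 ∧ P s u = 1/2 ∧ ∀ w, w ≠ t → w ≠ u → P s w = 0))
    (s t : ι) : ∃ k : ℤ, 2 * P s t = k := by
  rcases hrow s with ⟨t₀, h₁, h₀⟩ | ⟨t₀, u₀, -, ht₀, hu₀, h₀⟩
  · rcases eq_or_ne t t₀ with rfl | ht
    · exact ⟨2, by rw [h₁]; norm_num⟩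
    · exact ⟨0, by rw [h₀ t ht]; norm_num⟩
  · rcases eq_or_ne t t₀ with rfl | ht
    · exact ⟨1, by rw [ht₀]; norm_num⟩
    rcases eq_or_ne t u₀ with rfl | hu
    · exact ⟨1, by rw [hu₀]; norm_num⟩
    · exact ⟨0, by rw [h₀ t ht hu]; norm_num⟩

theorem stmt11_general (n : ℕ) (P : Fin n → Fin n → ℝ)
    (hstoch : ∀ s, (∀ t, 0 ≤ P s t) ∧ ∑ t, P s t = 1)
    (hrow : ∀ s, (∃ t, P s t = 1 ∧ ∀ u, u ≠ t → P s u = 0) ∨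
      (∃ t u, t ≠ u ∧ P s t = 1/2 ∧ P s u = 1/2 ∧
        ∀ w, w ≠ t → w ≠ u → P s w = 0))
    (T : Finset (Fin n))
    (h : Fin n → ℝ)
    (hbd : ∀ s, 0 ≤ h s ∧ h s ≤ 1)
    (hT : ∀ s ∈ T, h s = 1)
    (hfix : ∀ s ∉ T, h s = ∑ t, P s t * h t)
    (hmin : ∀ g : Fin n → ℝ, (∀ s, 0 ≤ g s ∧ g s ≤ 1) → (∀ s ∈ T, g s = 1) →
      (∀ s ∉ T, g s = ∑ t, P s t * g t) → ∀ s, h s ≤ g s) :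
    ∀ s, ∃ p q : ℕ, q ≠ 0 ∧ p ≤ 4 ^ (n - 1) ∧ q ≤ 4 ^ (n - 1) ∧
      h s = (p : ℝ) / (q : ℝ) := by
  have hP0 : ∀ s t, 0 ≤ P s t := fun s => (hstoch s).1
  have hP1 : ∀ s, ∑ t, P s t ≤ 1 := fun s => (hstoch s).2.le
  set R := reachingStates P T
  obtain ⟨g, hg01, hgT, hgfix, hg0⟩ := exists_solution_eq_zero_of_not_reaches P T hP0 hP1
  have hsys : dirichletMatrix P R *ᵥ h = fun s => if s ∈ T then 1 else 0 := by
    refine (dirichletMatrix_mulVec_eq_iff P R fun s hs => if_neg (mem_reachingStates.1 hs).1).2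
      ⟨fun s hs => hfix s (mem_reachingStates.1 hs).1, fun s hs => ?_⟩
    split_ifs with hsT
    · exact hT s hsT
    · have hns : ¬ Reaches P T s := fun hr => hs (mem_reachingStates.2 ⟨hsT, hr⟩)
      exact le_antisymm (hg0 s hns ▸ hmin g hg01 hgT hgfix s) (hbd s).1
  intro s
  obtain ⟨p, q, hq, hpq, hqA, hs⟩ := exists_nat_div_of_mulVec_eq
    (dirichletMatrix_entry_eq_intCast P R (two_mul_eq_intCast_of_binary hrow))
    (fun s => ⟨if s ∈ T then 1 else 0, by split_ifs <;> simp⟩)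
    (det_dirichletMatrix_ne_zero R hP0 hP1 exists_exit_reachingStates) hsys (hbd s)
  have hqn : q ≤ 4 ^ (n - 1) := by
    have hcard : #R ≤ n - 1 := by simpa using card_reachingStates_le P T
    exact_mod_cast hqA.trans ((prod_sum_abs_dirichletMatrix_le R hP0 hP1).trans
      (pow_le_pow_right₀ (by norm_num) hcard))
  exact ⟨p, q, hq, hpq.trans hqn, hqn, hs⟩

theorem stmt11 (n : ℕ) (hn : 0 < n) (P : Fin n → Fin n → ℝ)
    (hstoch : ∀ s, (∀ t, 0 ≤ P s t) ∧ ∑ t, P s t = 1)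
    (hrow : ∀ s, (∃ t, P s t = 1 ∧ ∀ u, u ≠ t → P s u = 0) ∨
      (∃ t u, t ≠ u ∧ P s t = 1/2 ∧ P s u = 1/2 ∧
        ∀ w, w ≠ t → w ≠ u → P s w = 0))
    (T : Finset (Fin n)) (habs : ∀ s ∈ T, P s s = 1)
    (h : Fin n → ℝ)
    (hbd : ∀ s, 0 ≤ h s ∧ h s ≤ 1)
    (hT : ∀ s ∈ T, h s = 1)
    (hfix : ∀ s ∉ T, h s = ∑ t, P s t * h t)
    (hmin : ∀ g : Fin n → ℝ, (∀ s, 0 ≤ g s ∧ g s ≤ 1) → (∀ s ∈ T, g s = 1) →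
      (∀ s ∉ T, g s = ∑ t, P s t * g t) → ∀ s, h s ≤ g s) :
    ∀ s, ∃ p q : ℕ, q ≠ 0 ∧ p ≤ 4 ^ (n - 1) ∧ q ≤ 4 ^ (n - 1) ∧
      h s = (p : ℝ) / (q : ℝ) :=
  stmt11_general n P hstoch hrow T h hbd hT hfix hmin
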